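/- arXiv:1411.7315 — 2 statements merged into one kernel-verified Lean document; each statement's English description precedes it below -/
import Mathlib

section
/- For every string s ∈ Σ* and every nonterminal A of G, the minimum score of a derivation A ⇒* s in the augmented grammar G_e equals 1 if and only if min{ d_ed(s, s') : s' ∈ Σ*, A ⇒* s' in G } = 1; that is, A derives s in G_e with a parse of score 1 (and none of score 0) exactly when there exists s' with A ⇒* s' in G and d_ed(s, s') = 1. -/
/-- A scored production of a grammar: a left-hand-side nonterminal, a right-hand-side
string of nonterminals and terminals, and a score (edit cost). -/
structure ScoredProd (N : Type*) (T : Type*) where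
  lhs : N
  rhs : List (N ⊕ T)
  score : ℕ

/-- `ScoredDerives P u v c` : from the sentential form `u` one can derive the sentential
form `v` using productions from `P` whose scores sum to `c`. -/
inductive ScoredDerives {N T : Type*} (P : Set (ScoredProd N T)) :
    List (N ⊕ T) → List (N ⊕ T) → ℕ → Prop
  | refl (w : List (N ⊕ T)) : ScoredDerives P w w 0
  | step {u l r : List (N ⊕ T)} {p : ScoredProd N T} {c : ℕ} :
      ScoredDerives P u (l ++ [Sum.inl p.lhs] ++ r) c → p ∈ P →
      ScoredDerives P u (l ++ p.rhs ++ r) (c + p.score)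

/-- A context-free grammar in Chomsky normal form: binary rules `A → BC`,
terminal rules `A → a`, and possibly the rule `S → ε` (recorded by `eps`). -/
structure CNF (N : Type*) (T : Type*) where
  start : N
  bin : Set (N × N × N)
  term : Set (N × T)
  eps : Prop

/-- The productions of the CNF grammar `G`, all of score `0`. -/
def CNF.prods {N T : Type*} (G : CNF N T) : Set (ScoredProd N T) :=
  {p | (∃ A B C, (A, B, C) ∈ G.bin ∧ p = ⟨A, [Sum.inl B, Sum.inl C], 0⟩) ∨
       (∃ A a, (A, a) ∈ G.term ∧ p = ⟨A, [Sum.inr a], 0⟩) ∨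
       (G.eps ∧ p = ⟨G.start, [], 0⟩)}

/-- Lift a production of `G` to the augmented grammar `G_e`, whose nonterminals are
`N ⊕ Unit` (with `Sum.inr ()` playing the role of the fresh nonterminal `I`). -/
def liftProd {N T : Type*} (p : ScoredProd N T) : ScoredProd (N ⊕ Unit) T :=
  ⟨Sum.inl p.lhs, p.rhs.map (Sum.map Sum.inl id), p.score⟩

/-- The productions of the augmented grammar `G_e`: the original productions of `G`
(score 0), elementary substitution rules `A → y` of score 1 (for `A` having some
terminal rule and `y` with `A → y ∉ P`), elementary insertion rules `I → x` of score 1,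
rules `A → IA`, `A → AI` of score 0, `I → II` of score 0, and elementary deletion rules
`A → ε` of score 1 for every terminal rule `A → x` of `G`. -/
def CNF.augProds {N T : Type*} (G : CNF N T) : Set (ScoredProd (N ⊕ Unit) T) :=
  (liftProd '' G.prods) ∪
  {p | ∃ A y, (∃ x, (A, x) ∈ G.term) ∧ (A, y) ∉ G.term ∧
        p = ⟨Sum.inl A, [Sum.inr y], 1⟩} ∪
  {p | ∃ x, p = ⟨Sum.inr (), [Sum.inr x], 1⟩} ∪
  {p | ∃ A : N, p = ⟨Sum.inl A, [Sum.inl (Sum.inr ()), Sum.inl (Sum.inl A)], 0⟩ ∨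
                p = ⟨Sum.inl A, [Sum.inl (Sum.inl A), Sum.inl (Sum.inr ())], 0⟩} ∪
  {(⟨Sum.inr (), [Sum.inl (Sum.inr ()), Sum.inl (Sum.inr ())], 0⟩ : ScoredProd (N ⊕ Unit) T)} ∪
  {p | ∃ A x, (A, x) ∈ G.term ∧ p = ⟨Sum.inl A, [], 1⟩}

/-- `A ⇒* s` in the grammar `G`. -/
def CNF.Derives {N T : Type*} (G : CNF N T) (A : N) (s : List T) : Prop :=
  ∃ u, ScoredDerives G.prods [Sum.inl A] (s.map Sum.inr) u

/-- The language of `G`. -/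
def CNF.lang {N T : Type*} (G : CNF N T) : Set (List T) := {s | G.Derives G.start s}

/-- `A ⇒* s` in the augmented grammar `G_e` with a derivation of score exactly `u`. -/
def CNF.augDerives {N T : Type*} (G : CNF N T) (A : N ⊕ Unit) (s : List T) (u : ℕ) : Prop :=
  ScoredDerives G.augProds [Sum.inl A] (s.map Sum.inr) u

/-- Cost structure for Levenshtein distance (as in the older Mathlib
`Mathlib/Data/List/EditDistance/Defs.lean`, since removed). -/
structure Levenshtein.Cost (α β δ : Type*) where
  delete : α → δ
  insert : β → δ
  substitute : α → β → δ

/-- The default unit-cost structure. -/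
def Levenshtein.defaultCost {α : Type*} [DecidableEq α] : Levenshtein.Cost α α ℕ where
  delete _ := 1
  insert _ := 1
  substitute a b := if a = b then 0 else 1

/-- Inner step of the Levenshtein dynamic program (older Mathlib). -/
def Levenshtein.impl {α β δ : Type*} (C : Levenshtein.Cost α β δ) [AddZeroClass δ] [Min δ]
    (xs : List α) (y : β) (d : {r : List δ // 0 < r.length}) :
    {r : List δ // 0 < r.length} :=
  let ⟨ds, w⟩ := d
  xs.zip (ds.zip ds.tail) |>.foldr
    (init := ⟨[C.insert y + ds.getLast (List.ne_nil_of_length_pos w)], by simp⟩)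
    (fun ⟨x, d₀, d₁⟩ ⟨r, w⟩ =>
      ⟨min (C.delete x + r[0]) (min (C.insert y + d₀) (C.substitute x y + d₁)) :: r, by simp⟩)

/-- Levenshtein distances of all suffixes (older Mathlib). -/
def suffixLevenshtein {α β δ : Type*} (C : Levenshtein.Cost α β δ) [AddZeroClass δ] [Min δ]
    (xs : List α) (ys : List β) : {r : List δ // 0 < r.length} :=
  ys.foldr
    (Levenshtein.impl C xs)
    (xs.foldr (init := ⟨[0], by simp⟩) (fun a ⟨ds, w⟩ => ⟨(C.delete a + ds[0]) :: ds, by simp⟩))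

/-- The Levenshtein distance (older Mathlib). -/
def levenshtein {α β δ : Type*} (C : Levenshtein.Cost α β δ) [AddZeroClass δ] [Min δ]
    (xs : List α) (ys : List β) : δ :=
  let ⟨r, w⟩ := suffixLevenshtein C xs ys
  r[0]

/-- The standard (unit-cost) string edit distance. -/
def editDist {T : Type*} [DecidableEq T] (s t : List T) : ℕ :=
  levenshtein Levenshtein.defaultCost s t

/-- The language edit distance `d_G(G,s) = min_{z ∈ L(G)} d_ed(s,z)`. -/
noncomputable def dG {N T : Type*} [DecidableEq T] (G : CNF N T) (s : List T) : ℕ :=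
  sInf {d | ∃ z ∈ G.lang, editDist s z = d}



/-! A parse of score 1 in `G_e` uses exactly one scored rule. Erasing the insertion nonterminal
`I` turns every score-0 rule into a rule of `G` or a trivial one, and the scored rule into a
single edit of the yield, so `s` is one edit away from a word derived in `G`. Conversely, one
edit of the yield of a parse tree of `G` falls into the yield of a single subtree, down to a
leaf `A → a` (substitution, deletion, or insertion via `A → IA`, `A → AI`) or to the right end
of a subtree (`A → AI`), and there `G_e` realises it with score at most 1. As the score-0 parses
of `G_e` are exactly the derivations of `G`, and `d_ed(s, s') ≤ 1` means `s = s'` or one edit,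
the minimal score is 1 exactly when the least edit distance is 1.

Parse trees (`ParseForest`) rather than derivations make both directions structural
inductions. -/

theorem Nat.sInf_eq_one_iff {S : Set ℕ} : sInf S = 1 ↔ 1 ∈ S ∧ 0 ∉ S := by
  constructor
  · intro h
    have hS : S.Nonempty := Nat.nonempty_of_sInf_eq_succ h
    exact ⟨h ▸ Nat.sInf_mem hS, fun h0 => by simp [Nat.sInf_eq_zero.mpr (.inl h0)] at h⟩
  · rintro ⟨h1, h0⟩
    have := Nat.sInf_le h1
    have : sInf S ≠ 0 := fun h => (Nat.sInf_eq_zero.mp h).elim h0 (by rintro rfl; exact h1)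
    omega

section Levenshtein

variable {α β δ : Type*} (C : Levenshtein.Cost α β δ) [AddZeroClass δ] [Min δ]

/-- The textbook recursion for the Levenshtein distance; `suffixLevenshtein` tabulates it on
all suffixes of the first argument. -/
def levenshteinRec : List α → List β → δ
  | [], [] => 0
  | [], y :: ys => C.insert y + levenshteinRec [] ys
  | x :: xs, [] => C.delete x + levenshteinRec xs []
  | x :: xs, y :: ys => min (C.delete x + levenshteinRec xs (y :: ys))
      (min (C.insert y + levenshteinRec (x :: xs) ys) (C.substitute x y + levenshteinRec xs ys))

theorem Levenshtein.impl_eq_map_tails (y : β) (ys : List β) :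
    ∀ (xs : List α) (ds : List δ) (w : 0 < ds.length),
      ds = xs.tails.map (levenshteinRec C · ys) →
      (Levenshtein.impl C xs y ⟨ds, w⟩).1 = xs.tails.map (levenshteinRec C · (y :: ys))
  | [], ds, w, h => by subst h; simp [Levenshtein.impl, levenshteinRec]
  | x :: xs, _, _, h => by
    subst h
    have ih := Levenshtein.impl_eq_map_tails y ys xs _ (by cases xs <;> simp) rfl
    change (Levenshtein.impl C (x :: xs) y
      ⟨levenshteinRec C (x :: xs) ys :: xs.tails.map (levenshteinRec C · ys), _⟩).1 = _
    rw [List.tails_cons, List.map_cons, levenshteinRec]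
    cases xs <;> simp_all [Levenshtein.impl]

theorem suffixLevenshtein_eq_map_tails (xs : List α) :
    ∀ ys : List β, (suffixLevenshtein C xs ys).1 = xs.tails.map (levenshteinRec C · ys)
  | [] => by
    induction xs with
    | nil => simp [suffixLevenshtein, levenshteinRec]
    | cons x xs ih =>
      change (C.delete x + (suffixLevenshtein C xs []).1[0]'(suffixLevenshtein C xs []).2) ::
        (suffixLevenshtein C xs []).1 = _
      simp only [ih, List.tails_cons, List.map_cons, levenshteinRec]
      cases xs <;> rfl
  | y :: ys => by
    change (Levenshtein.impl C xs y (suffixLevenshtein C xs ys)).1 = _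
    exact Levenshtein.impl_eq_map_tails C y ys xs _ _ (suffixLevenshtein_eq_map_tails xs ys)

theorem levenshtein_eq_levenshteinRec (xs : List α) (ys : List β) :
    levenshtein C xs ys = levenshteinRec C xs ys := by
  change (suffixLevenshtein C xs ys).1[0]'(suffixLevenshtein C xs ys).2 = _
  simp only [suffixLevenshtein_eq_map_tails]
  cases xs <;> rfl

@[simp] theorem levenshtein_nil_nil : levenshtein C ([] : List α) ([] : List β) = 0 := by
  rw [levenshtein_eq_levenshteinRec, levenshteinRec]

@[simp] theorem levenshtein_nil_cons (y : β) (ys : List β) :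
    levenshtein C ([] : List α) (y :: ys) = C.insert y + levenshtein C [] ys := by
  simp only [levenshtein_eq_levenshteinRec, levenshteinRec]

@[simp] theorem levenshtein_cons_nil (x : α) (xs : List α) :
    levenshtein C (x :: xs) ([] : List β) = C.delete x + levenshtein C xs [] := by
  simp only [levenshtein_eq_levenshteinRec, levenshteinRec]

@[simp] theorem levenshtein_cons_cons (x : α) (xs : List α) (y : β) (ys : List β) :
    levenshtein C (x :: xs) (y :: ys) =
      min (C.delete x + levenshtein C xs (y :: ys))
        (min (C.insert y + levenshtein C (x :: xs) ys)
          (C.substitute x y + levenshtein C xs ys)) := by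
  simp only [levenshtein_eq_levenshteinRec, levenshteinRec]

end Levenshtein

/-- `OneEdit s t`: `t` arises from `s` by deleting, inserting or substituting one letter. -/
inductive OneEdit {α : Type*} : List α → List α → Prop
  | delete (a : α) (l : List α) : OneEdit (a :: l) l
  | insert (a : α) (l : List α) : OneEdit l (a :: l)
  | substitute (a b : α) (l : List α) : OneEdit (a :: l) (b :: l)
  | cons (a : α) {l l' : List α} : OneEdit l l' → OneEdit (a :: l) (a :: l')

namespace OneEdit

variable {α : Type*}

theorem append_left {s t : List α} (h : OneEdit s t) : ∀ w : List α, OneEdit (w ++ s) (w ++ t)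
  | [] => h
  | a :: w => (h.append_left w).cons a

theorem append_right {s t : List α} (h : OneEdit s t) (w : List α) :
    OneEdit (s ++ w) (t ++ w) := by
  induction h with
  | delete a l => exact delete a _
  | insert a l => exact insert a _
  | substitute a b l => exact substitute a b _
  | cons a _ ih => exact ih.cons a

theorem eq_singleton_of_nil {s : List α} (h : OneEdit s []) : ∃ y, s = [y] := by
  cases h
  exact ⟨_, rfl⟩

theorem of_append {s : List α} : ∀ {t₁ t₂ : List α}, OneEdit s (t₁ ++ t₂) →
    (∃ s₁, s = s₁ ++ t₂ ∧ OneEdit s₁ t₁) ∨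
      (∃ s₂, s = t₁ ++ s₂ ∧ OneEdit s₂ t₂)
  | [], _, h => Or.inr ⟨s, rfl, h⟩
  | a :: t₁, t₂, h => by
    generalize ht : a :: t₁ ++ t₂ = t at h
    cases h with
    | delete x l => exact Or.inl ⟨x :: a :: t₁, by simp [ht], delete x _⟩
    | insert x l =>
      obtain ⟨rfl, rfl⟩ := List.cons_eq_cons.mp ht
      exact Or.inl ⟨t₁, rfl, insert a t₁⟩
    | substitute x y l =>
      obtain ⟨rfl, rfl⟩ := List.cons_eq_cons.mp ht
      exact Or.inl ⟨x :: t₁, rfl, substitute x a t₁⟩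
    | @cons x l l' h =>
      obtain ⟨rfl, rfl⟩ := List.cons_eq_cons.mp ht
      rcases of_append h with ⟨s₁, rfl, h₁⟩ | ⟨s₂, rfl, h₂⟩
      · exact Or.inl ⟨a :: s₁, rfl, h₁.cons a⟩
      · exact Or.inr ⟨s₂, rfl, h₂⟩

end OneEdit

section EditDistance

variable {α : Type*} [DecidableEq α]

@[simp] theorem editDist_nil_nil : editDist ([] : List α) [] = 0 :=
  levenshtein_nil_nil _

@[simp] theorem editDist_nil_cons (y : α) (ys : List α) :
    editDist [] (y :: ys) = 1 + editDist [] ys :=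
  levenshtein_nil_cons _ y ys

@[simp] theorem editDist_cons_nil (x : α) (xs : List α) :
    editDist (x :: xs) [] = 1 + editDist xs [] :=
  levenshtein_cons_nil _ x xs

theorem editDist_cons_cons (x : α) (xs : List α) (y : α) (ys : List α) :
    editDist (x :: xs) (y :: ys) =
      min (1 + editDist xs (y :: ys))
        (min (1 + editDist (x :: xs) ys) ((if x = y then 0 else 1) + editDist xs ys)) :=
  levenshtein_cons_cons _ x xs y ys

@[simp] theorem editDist_self (s : List α) : editDist s s = 0 := by
  induction s with
  | nil => rfl
  | cons x xs ih => simp [editDist_cons_cons, ih]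

theorem eq_of_editDist_eq_zero {s t : List α} (h : editDist s t = 0) : s = t := by
  induction s generalizing t with
  | nil => cases t <;> simp_all
  | cons x xs ih =>
    cases t with
    | nil => simp at h
    | cons y ys =>
      simp only [editDist_cons_cons, Nat.min_eq_zero_iff] at h
      rcases h with h | h | h
      · omega
      · omega
      · split_ifs at h with hxy
        · rw [hxy, ih (t := ys) (by omega)]
        · omega

@[simp] theorem editDist_eq_zero_iff {s t : List α} : editDist s t = 0 ↔ s = t :=
  ⟨eq_of_editDist_eq_zero, fun h => h ▸ editDist_self s⟩

theorem OneEdit.editDist_le_one {s t : List α} (h : OneEdit s t) : editDist s t ≤ 1 := by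
  induction h with
  | delete a l => cases l <;> simp [editDist_cons_cons]
  | insert a l => cases l <;> simp [editDist_cons_cons]
  | substitute a b l => simp only [editDist_cons_cons, editDist_self]; split_ifs <;> omega
  | cons a _ ih => simp only [editDist_cons_cons, if_pos]; omega

theorem eq_or_oneEdit_of_editDist_le_one {s t : List α} (h : editDist s t ≤ 1) :
    s = t ∨ OneEdit s t := by
  induction s generalizing t with
  | nil =>
    cases t with
    | nil => exact Or.inl rfl
    | cons y ys =>
      obtain rfl : ys = [] := by simpa using h
      exact Or.inr (.insert y [])
  | cons x xs ih =>
    cases t with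
    | nil =>
      obtain rfl : xs = [] := by simpa using h
      exact Or.inr (.delete x [])
    | cons y ys =>
      rw [editDist_cons_cons] at h
      rcases min_le_iff.mp h with h | h
      · obtain rfl := eq_of_editDist_eq_zero (by omega : editDist xs (y :: ys) = 0)
        exact Or.inr (.delete x _)
      rcases min_le_iff.mp h with h | h
      · obtain rfl := eq_of_editDist_eq_zero (by omega : editDist (x :: xs) ys = 0)
        exact Or.inr (.insert y _)
      split_ifs at h with hxy
      · subst hxy
        rcases ih (t := ys) (by omega) with rfl | h
        · exact Or.inl rfl
        · exact Or.inr (h.cons x)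
      · obtain rfl := eq_of_editDist_eq_zero (by omega : editDist xs ys = 0)
        exact Or.inr (.substitute x y _)

theorem editDist_eq_one_iff {s t : List α} : editDist s t = 1 ↔ s ≠ t ∧ OneEdit s t := by
  constructor
  · intro h
    have hne : s ≠ t := by rintro rfl; simp at h
    exact ⟨hne, (eq_or_oneEdit_of_editDist_le_one h.le).resolve_left hne⟩
  · rintro ⟨hne, h⟩
    have := h.editDist_le_one
    have : editDist s t ≠ 0 := by simpa using hne
    omega

end EditDistance

namespace ScoredDerives

variable {N T : Type*} {P : Set (ScoredProd N T)}

theorem trans {u v w : List (N ⊕ T)} {c d : ℕ} (h₁ : ScoredDerives P u v c)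
    (h₂ : ScoredDerives P v w d) : ScoredDerives P u w (c + d) := by
  induction h₂ with
  | refl => exact h₁
  | step _ hp ih => rw [← Nat.add_assoc]; exact ih.step hp

theorem single {p : ScoredProd N T} (hp : p ∈ P) :
    ScoredDerives P [Sum.inl p.lhs] p.rhs p.score := by
  simpa using (refl (P := P) ([] ++ [Sum.inl p.lhs] ++ [])).step hp

theorem append_context {u v : List (N ⊕ T)} {c : ℕ} (h : ScoredDerives P u v c)
    (l r : List (N ⊕ T)) : ScoredDerives P (l ++ u ++ r) (l ++ v ++ r) c := by
  induction h with
  | refl => exact refl _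
  | @step l' r' _ _ _ hp ih =>
    simpa using step (l := l ++ l') (r := r' ++ r) (by simpa using ih) hp

theorem append {u₁ v₁ u₂ v₂ : List (N ⊕ T)} {c₁ c₂ : ℕ}
    (h₁ : ScoredDerives P u₁ v₁ c₁) (h₂ : ScoredDerives P u₂ v₂ c₂) :
    ScoredDerives P (u₁ ++ u₂) (v₁ ++ v₂) (c₁ + c₂) := by
  have h₁' := h₁.append_context [] u₂
  have h₂' := h₂.append_context v₁ []
  simp only [List.nil_append, List.append_nil] at h₁' h₂'
  exact h₁'.trans h₂'

end ScoredDerives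

/-- `ParseForest P u s c`: the sentential form `u` has a sequence of parse trees over `P`,
one per symbol, whose leaves spell `s` and whose productions have total score `c`. -/
inductive ParseForest {N T : Type*} (P : Set (ScoredProd N T)) :
    List (N ⊕ T) → List T → ℕ → Prop
  | nil : ParseForest P [] [] 0
  | terminal (a : T) {u : List (N ⊕ T)} {s : List T} {c : ℕ} :
      ParseForest P u s c → ParseForest P (Sum.inr a :: u) (a :: s) c
  | node {p : ScoredProd N T} {u : List (N ⊕ T)} {s₁ s₂ : List T} {c₁ c₂ : ℕ} :
      p ∈ P → ParseForest P p.rhs s₁ c₁ → ParseForest P u s₂ c₂ →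
      ParseForest P (Sum.inl p.lhs :: u) (s₁ ++ s₂) (p.score + c₁ + c₂)

namespace ParseForest

variable {N T : Type*} {P : Set (ScoredProd N T)}

theorem congr_score {u : List (N ⊕ T)} {s : List T} {c c' : ℕ} (h : ParseForest P u s c)
    (e : c = c') : ParseForest P u s c' := e ▸ h

theorem map_inr (s : List T) : ParseForest P (s.map Sum.inr) s 0 := by
  induction s with
  | nil => exact nil
  | cons a s ih => exact ih.terminal a

theorem eq_of_map_inr : ∀ {t s : List T} {c : ℕ},
    ParseForest P (t.map Sum.inr) s c → s = t ∧ c = 0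
  | [], _, _, .nil => ⟨rfl, rfl⟩
  | _ :: _, _, _, .terminal _ h => by
    obtain ⟨rfl, rfl⟩ := eq_of_map_inr h
    exact ⟨rfl, rfl⟩

theorem single {p : ScoredProd N T} {s : List T} {c : ℕ} (hp : p ∈ P)
    (h : ParseForest P p.rhs s c) : ParseForest P [Sum.inl p.lhs] s (p.score + c) := by
  simpa using node hp h nil

theorem append {u₁ u₂ : List (N ⊕ T)} {s₁ s₂ : List T} {c₁ c₂ : ℕ}
    (h₁ : ParseForest P u₁ s₁ c₁) (h₂ : ParseForest P u₂ s₂ c₂) :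
    ParseForest P (u₁ ++ u₂) (s₁ ++ s₂) (c₁ + c₂) := by
  induction h₁ with
  | nil => simpa using h₂
  | terminal a _ ih => exact ih.terminal a
  | node hp h _ _ ih =>
    simpa [Nat.add_assoc] using node hp h ih

theorem of_append : ∀ {u₁ u₂ : List (N ⊕ T)} {s : List T} {c : ℕ},
    ParseForest P (u₁ ++ u₂) s c → ∃ s₁ s₂ c₁ c₂, s = s₁ ++ s₂ ∧
      c = c₁ + c₂ ∧ ParseForest P u₁ s₁ c₁ ∧ ParseForest P u₂ s₂ c₂
  | [], _, s, c, h => ⟨[], s, 0, c, rfl, by simp, nil, h⟩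
  | _ :: _, _, _, _, .terminal a h => by
    obtain ⟨s₁, s₂, c₁, c₂, rfl, rfl, h₁, h₂⟩ := of_append h
    exact ⟨a :: s₁, s₂, c₁, c₂, rfl, rfl, h₁.terminal a, h₂⟩
  | _ :: _, _, _, _, .node hp hr h => by
    obtain ⟨s₁, s₂, c₁, c₂, rfl, rfl, h₁, h₂⟩ := of_append h
    exact ⟨_ ++ s₁, s₂, _ + c₁, c₂, by simp, by omega, node hp hr h₁, h₂⟩

theorem unstep {p : ScoredProd N T} (hp : p ∈ P) {l r : List (N ⊕ T)} {s : List T} {c : ℕ}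
    (h : ParseForest P (l ++ p.rhs ++ r) s c) :
    ParseForest P (l ++ [Sum.inl p.lhs] ++ r) s (p.score + c) := by
  obtain ⟨s₁, s', c₁, c', rfl, rfl, hl, h'⟩ := of_append (u₁ := l) (by simpa using h)
  obtain ⟨s₂, s₃, c₂, c₃, rfl, rfl, hm, hr⟩ := of_append h'
  simpa [Nat.add_assoc, Nat.add_left_comm] using hl.append (node hp hm hr)

theorem toScoredDerives {u : List (N ⊕ T)} {s : List T} {c : ℕ} (h : ParseForest P u s c) :
    ScoredDerives P u (s.map Sum.inr) c := by
  induction h with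
  | nil => exact .refl _
  | terminal a _ ih => simpa using ih.append_context [Sum.inr a] []
  | node hp _ _ ih₁ ih₂ =>
    simpa [Nat.add_assoc] using ((ScoredDerives.single hp).append_context [] _).trans
      (ih₁.append ih₂)

theorem of_scoredDerives {u v : List (N ⊕ T)} {c : ℕ} (h : ScoredDerives P u v c) :
    ∀ {s : List T} {d : ℕ}, ParseForest P v s d → ParseForest P u s (c + d) := by
  induction h with
  | refl => intro s d h; simpa using h
  | step _ hp ih =>
    intro s d h
    simpa [Nat.add_assoc] using ih (unstep hp h)

theorem iff_scoredDerives {u : List (N ⊕ T)} {s : List T} {c : ℕ} :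
    ParseForest P u s c ↔ ScoredDerives P u (s.map Sum.inr) c :=
  ⟨toScoredDerives, fun h => of_scoredDerives h (map_inr s)⟩

end ParseForest

/-- `u.filterMap eraseInsertion` erases the insertion nonterminal `I = Sum.inr ()` from a
sentential form `u` of `G_e`. -/
def eraseInsertion {N T : Type*} : (N ⊕ Unit) ⊕ T → Option (N ⊕ T)
  | .inl (.inl A) => some (.inl A)
  | .inl (.inr _) => none
  | .inr a => some (.inr a)

@[simp] theorem filterMap_eraseInsertion_map {N T : Type*} (u : List (N ⊕ T)) :
    (u.map (Sum.map Sum.inl id)).filterMap eraseInsertion = u := by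
  induction u with
  | nil => rfl
  | cons x u ih => cases x <;> simpa [eraseInsertion] using ih

namespace CNF

variable {N T : Type*} {G : CNF N T}

theorem score_eq_zero_of_mem_prods {p : ScoredProd N T} (hp : p ∈ G.prods) : p.score = 0 := by
  rcases hp with ⟨_, _, _, _, rfl⟩ | ⟨_, _, _, rfl⟩ | ⟨_, rfl⟩ <;> rfl

theorem liftProd_mem_augProds {p : ScoredProd N T} (hp : p ∈ G.prods) :
    liftProd p ∈ G.augProds := by
  simp only [augProds, Set.mem_union]
  exact .inl (.inl (.inl (.inl (.inl ⟨p, hp, rfl⟩))))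

theorem parseForest_of_mem_term {A : N} {a : T} (h : (A, a) ∈ G.term) :
    ParseForest G.prods [Sum.inl A] [a] 0 :=
  ParseForest.single (p := ⟨A, [Sum.inr a], 0⟩) (.inr (.inl ⟨A, a, h, rfl⟩))
    (.terminal a .nil)

theorem parseForest_prods_score_eq_zero {u : List (N ⊕ T)} {s : List T} {c : ℕ}
    (h : ParseForest G.prods u s c) : c = 0 := by
  induction h with
  | nil => rfl
  | terminal _ _ ih => exact ih
  | node hp _ _ ih₁ ih₂ => simp [score_eq_zero_of_mem_prods hp, ih₁, ih₂]

theorem parseForest_augProds_lift {u : List (N ⊕ T)} {s : List T} {c : ℕ}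
    (h : ParseForest G.prods u s c) :
    ParseForest G.augProds (u.map (Sum.map Sum.inl id)) s 0 := by
  induction h with
  | nil => exact .nil
  | terminal a _ ih => exact ih.terminal a
  | node hp _ _ ih₁ ih₂ =>
    exact (ParseForest.node (liftProd_mem_augProds hp) ih₁ ih₂).congr_score
      (by simp [liftProd, score_eq_zero_of_mem_prods hp])

/-- A score-0 production of `G_e` is, once `I` is erased, a production of `G` or trivial. -/
theorem parseForest_prods_erase_lhs {p : ScoredProd (N ⊕ Unit) T} (hp : p ∈ G.augProds)
    (h0 : p.score = 0) {s : List T}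
    (h : ParseForest G.prods (p.rhs.filterMap eraseInsertion) s 0) :
    ParseForest G.prods ([Sum.inl p.lhs].filterMap eraseInsertion) s 0 := by
  rcases hp with
    ((((⟨q, hq, rfl⟩ | ⟨_, _, _, _, rfl⟩) | ⟨_, rfl⟩) | ⟨_, rfl | rfl⟩) | rfl) |
      ⟨_, _, _, rfl⟩
  · simp only [liftProd, filterMap_eraseInsertion_map] at h ⊢
    exact (ParseForest.single hq h).congr_score (score_eq_zero_of_mem_prods hq)
  all_goals first | exact absurd h0 one_ne_zero | exact h

theorem exists_oneEdit_of_score_ne_zero {p : ScoredProd (N ⊕ Unit) T} (hp : p ∈ G.augProds)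
    (h0 : p.score ≠ 0) {s : List T} (h : ParseForest G.augProds p.rhs s 0) :
    ∃ s', ParseForest G.prods ([Sum.inl p.lhs].filterMap eraseInsertion) s' 0 ∧
      OneEdit s s' := by
  rcases hp with
    ((((⟨q, hq, rfl⟩ | ⟨A, y, ⟨x, hx⟩, -, rfl⟩) | ⟨y, rfl⟩) | ⟨_, rfl | rfl⟩) |
      rfl) | ⟨A, x, hx, rfl⟩
  · exact absurd (score_eq_zero_of_mem_prods hq) h0
  · obtain ⟨rfl, -⟩ := ParseForest.eq_of_map_inr (t := [y]) h
    exact ⟨[x], parseForest_of_mem_term hx, .substitute y x []⟩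
  · obtain ⟨rfl, -⟩ := ParseForest.eq_of_map_inr (t := [y]) h
    exact ⟨[], .nil, .delete y []⟩
  iterate 3 exact absurd rfl h0
  · obtain ⟨rfl, -⟩ := ParseForest.eq_of_map_inr (t := []) h
    exact ⟨[x], parseForest_of_mem_term hx, .insert x []⟩

theorem parseForest_prods_erase {u : List ((N ⊕ Unit) ⊕ T)} {s : List T}
    (h : ParseForest G.augProds u s 0) :
    ParseForest G.prods (u.filterMap eraseInsertion) s 0 := by
  generalize hc : 0 = c at h ⊢
  induction h with
  | nil => exact .nil
  | terminal a _ ih => exact (ih hc).terminal a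
  | @node p _ _ _ c₁ c₂ hp _ _ ih₁ ih₂ =>
    obtain ⟨hp0, rfl, rfl⟩ : p.score = 0 ∧ c₁ = 0 ∧ c₂ = 0 := by omega
    rw [← List.singleton_append, List.filterMap_append]
    exact ((parseForest_prods_erase_lhs hp hp0 (ih₁ rfl)).append (ih₂ rfl)).congr_score hc

theorem exists_oneEdit_parseForest_prods_erase {u : List ((N ⊕ Unit) ⊕ T)} {s : List T}
    (h : ParseForest G.augProds u s 1) :
    ∃ s', ParseForest G.prods (u.filterMap eraseInsertion) s' 0 ∧ OneEdit s s' := by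
  generalize hc : 1 = c at h
  induction h with
  | nil => omega
  | terminal a _ ih =>
    obtain ⟨s', h', hs⟩ := ih hc
    exact ⟨a :: s', h'.terminal a, hs.cons a⟩
  | @node p _ s₁ s₂ c₁ c₂ hp h₁ h₂ ih₁ ih₂ =>
    rw [← List.singleton_append, List.filterMap_append]
    by_cases hp0 : p.score = 0
    · by_cases hc₁ : c₁ = 0
      · obtain ⟨s', h', hs⟩ := ih₂ (by omega)
        refine ⟨s₁ ++ s', ?_, hs.append_left s₁⟩
        exact (parseForest_prods_erase_lhs hp hp0 (parseForest_prods_erase (hc₁ ▸ h₁))).append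
          h'
      · obtain ⟨s', h', hs⟩ := ih₁ (by omega)
        refine ⟨s' ++ s₂, ?_, hs.append_right s₂⟩
        exact (parseForest_prods_erase_lhs hp hp0 h').append
          (parseForest_prods_erase ((show c₂ = 0 by omega) ▸ h₂))
    · obtain ⟨s', h', hs⟩ :=
        exists_oneEdit_of_score_ne_zero hp hp0 ((show c₁ = 0 by omega) ▸ h₁)
      exact ⟨s' ++ s₂, h'.append (parseForest_prods_erase ((show c₂ = 0 by omega) ▸ h₂)),
        hs.append_right s₂⟩

theorem parseForest_insertion (y : T) :
    ParseForest G.augProds [Sum.inl (Sum.inr ())] [y] 1 :=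
  ParseForest.single (p := ⟨Sum.inr (), [Sum.inr y], 1⟩) (by simp [augProds]) (.terminal y .nil)

theorem parseForest_insert_right {A : N} {t : List T}
    (h : ParseForest G.augProds [Sum.inl (Sum.inl A)] t 0) (y : T) :
    ParseForest G.augProds [Sum.inl (Sum.inl A)] (t ++ [y]) 1 :=
  ParseForest.single (p := ⟨Sum.inl A, [Sum.inl (Sum.inl A), Sum.inl (Sum.inr ())], 0⟩)
    (by simp [augProds]) (h.append (parseForest_insertion y))

theorem parseForest_insert_left {A : N} {t : List T}
    (h : ParseForest G.augProds [Sum.inl (Sum.inl A)] t 0) (y : T) :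
    ParseForest G.augProds [Sum.inl (Sum.inl A)] (y :: t) 1 :=
  ParseForest.single (p := ⟨Sum.inl A, [Sum.inl (Sum.inr ()), Sum.inl (Sum.inl A)], 0⟩)
    (by simp [augProds]) ((parseForest_insertion y).append h)

theorem exists_parseForest_augProds_of_oneEdit_singleton {A : N} {a : T}
    (ha : (A, a) ∈ G.term) {s : List T} (hs : OneEdit s [a]) :
    ∃ d ≤ 1, ParseForest G.augProds [Sum.inl (Sum.inl A)] s d := by
  have hA : ParseForest G.augProds [Sum.inl (Sum.inl A)] [a] 0 :=
    parseForest_augProds_lift (parseForest_of_mem_term ha)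
  generalize ht : [a] = t at hs
  cases hs with
  | delete x l => subst ht; exact ⟨1, le_rfl, parseForest_insert_left hA x⟩
  | insert x l =>
    obtain ⟨rfl, rfl⟩ := List.cons_eq_cons.mp ht
    exact ⟨1, le_rfl, ParseForest.single (p := ⟨Sum.inl A, [], 1⟩)
      (by simp [augProds]; exact .inr ⟨a, ha⟩) .nil⟩
  | substitute x y l =>
    obtain ⟨rfl, rfl⟩ := List.cons_eq_cons.mp ht
    by_cases hx : (A, x) ∈ G.term
    · exact ⟨0, zero_le_one, parseForest_augProds_lift (parseForest_of_mem_term hx)⟩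
    · exact ⟨1, le_rfl, ParseForest.single (p := ⟨Sum.inl A, [Sum.inr x], 1⟩)
        (by simp [augProds]; exact .inr ⟨⟨a, ha⟩, hx⟩) (.terminal x .nil)⟩
  | cons x h =>
    obtain ⟨rfl, rfl⟩ := List.cons_eq_cons.mp ht
    obtain ⟨y, rfl⟩ := h.eq_singleton_of_nil
    exact ⟨1, le_rfl, parseForest_insert_right hA y⟩

/-- The edit lands in the yield of one tree. Binary right-hand sides again consist of
nonterminals, and an edit at a leaf, or an insertion at the right end of a yield, is realised
by a scored rule of `G_e`. -/
theorem exists_parseForest_augProds_of_oneEdit {u : List (N ⊕ T)} {t : List T} {c : ℕ}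
    (h : ParseForest G.prods u t c) (hu : ∀ x ∈ u, ∃ B, x = Sum.inl B) (hne : u ≠ [])
    {s : List T} (hs : OneEdit s t) :
    ∃ d ≤ 1, ParseForest G.augProds (u.map (Sum.map Sum.inl id)) s d := by
  induction h generalizing s with
  | nil => exact absurd rfl hne
  | terminal a => simp at hu
  | @node p u t₁ t₂ c₁ c₂ hp h₁ h₂ ih₁ ih₂ =>
    have hroot : ParseForest G.augProds [Sum.inl (Sum.inl p.lhs)] t₁ 0 :=
      parseForest_augProds_lift (ParseForest.single hp h₁)
    have htail := parseForest_augProds_lift h₂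
    rcases hs.of_append with ⟨s₁, rfl, hs₁⟩ | ⟨s₂, rfl, hs₂⟩
    · suffices ∃ d ≤ 1, ParseForest G.augProds [Sum.inl (Sum.inl p.lhs)] s₁ d by
        obtain ⟨d, hd, h⟩ := this
        exact ⟨d + 0, hd, h.append htail⟩
      rcases hp with ⟨A, B, C, hBC, rfl⟩ | ⟨A, a, ha, rfl⟩ | ⟨-, rfl⟩
      · obtain ⟨d, hd, h⟩ := ih₁ (by simp) (by simp) hs₁
        exact ⟨0 + d, by omega,
          ParseForest.single (liftProd_mem_augProds (.inl ⟨A, B, C, hBC, rfl⟩)) h⟩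
      · obtain ⟨rfl, -⟩ := ParseForest.eq_of_map_inr (t := [a]) h₁
        exact exists_parseForest_augProds_of_oneEdit_singleton ha hs₁
      · obtain ⟨rfl, -⟩ := ParseForest.eq_of_map_inr (t := []) h₁
        obtain ⟨y, rfl⟩ := hs₁.eq_singleton_of_nil
        exact ⟨1, le_rfl, parseForest_insert_right hroot y⟩
    · by_cases hu' : u = []
      · subst hu'
        obtain ⟨rfl, -⟩ := ParseForest.eq_of_map_inr (t := []) h₂
        obtain ⟨y, rfl⟩ := hs₂.eq_singleton_of_nil
        exact ⟨1, le_rfl, parseForest_insert_right hroot y⟩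
      · obtain ⟨d, hd, h⟩ := ih₂ (fun x hx => hu x (List.mem_cons_of_mem _ hx)) hu' hs₂
        exact ⟨0 + d, by omega, hroot.append h⟩

theorem derives_iff_parseForest {A : N} {s : List T} :
    G.Derives A s ↔ ParseForest G.prods [Sum.inl A] s 0 := by
  constructor
  · rintro ⟨c, h⟩
    have h := ParseForest.iff_scoredDerives.mpr h
    exact parseForest_prods_score_eq_zero h ▸ h
  · exact fun h => ⟨0, h.toScoredDerives⟩

theorem augDerives_iff_parseForest {X : N ⊕ Unit} {s : List T} {c : ℕ} :
    G.augDerives X s c ↔ ParseForest G.augProds [Sum.inl X] s c :=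
  ParseForest.iff_scoredDerives.symm

theorem augDerives_zero_iff {A : N} {s : List T} :
    G.augDerives (Sum.inl A) s 0 ↔ G.Derives A s := by
  rw [augDerives_iff_parseForest, derives_iff_parseForest]
  exact ⟨parseForest_prods_erase, parseForest_augProds_lift⟩

theorem exists_oneEdit_of_augDerives_one {A : N} {s : List T}
    (h : G.augDerives (Sum.inl A) s 1) : ∃ s', G.Derives A s' ∧ OneEdit s s' := by
  obtain ⟨s', h', hs⟩ :=
    exists_oneEdit_parseForest_prods_erase (augDerives_iff_parseForest.mp h)
  exact ⟨s', derives_iff_parseForest.mpr h', hs⟩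

theorem exists_augDerives_le_one_of_oneEdit {A : N} {s t : List T} (h : G.Derives A t)
    (hs : OneEdit s t) : ∃ d ≤ 1, G.augDerives (Sum.inl A) s d := by
  obtain ⟨d, hd, h'⟩ := exists_parseForest_augProds_of_oneEdit
    (derives_iff_parseForest.mp h) (by simp) (by simp) hs
  exact ⟨d, hd, augDerives_iff_parseForest.mpr h'⟩

end CNF

theorem augGrammar_min_score_one_iff_general {N T : Type*} [DecidableEq T]
    (G : CNF N T) (s : List T) (A : N) :
    (G.augDerives (Sum.inl A) s 1 ∧ ¬ G.augDerives (Sum.inl A) s 0) ↔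
      sInf {d | ∃ s', G.Derives A s' ∧ editDist s s' = d} = 1 := by
  have h0 : 0 ∈ {d | ∃ s', G.Derives A s' ∧ editDist s s' = d} ↔ G.Derives A s := by
    simp [eq_comm]
  rw [Nat.sInf_eq_one_iff, h0, CNF.augDerives_zero_iff]
  refine and_congr_left fun hA => ⟨fun h => ?_, fun ⟨s', hs', hd⟩ => ?_⟩
  · obtain ⟨s', hs', he⟩ := CNF.exists_oneEdit_of_augDerives_one h
    exact ⟨s', hs', editDist_eq_one_iff.mpr ⟨by rintro rfl; exact hA hs', he⟩⟩
  · obtain ⟨d, hd, h⟩ :=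
      CNF.exists_augDerives_le_one_of_oneEdit hs' (editDist_eq_one_iff.mp hd).2
    obtain rfl : d = 1 := by
      have : d ≠ 0 := by rintro rfl; exact hA (CNF.augDerives_zero_iff.mp h)
      omega
    exact h

/-- For every string `s ∈ Σ*` and every nonterminal `A` of `G`, the minimum
score of a derivation `A ⇒* s` in the augmented grammar `G_e` equals `1` (i.e. there is a
derivation of score `1` and none of score `0`) if and only if
`min { d_ed(s, s') : s' ∈ Σ*, A ⇒* s' in G } = 1`. -/
theorem augGrammar_min_score_one_iff {N T : Type*} [DecidableEq T]
    (G : CNF N T) (hne : G.lang.Nonempty) (s : List T) (A : N) :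
    (G.augDerives (Sum.inl A) s 1 ∧ ¬ G.augDerives (Sum.inl A) s 0) ↔
      sInf {d | ∃ s', G.Derives A s' ∧ editDist s s' = d} = 1 :=
  augGrammar_min_score_one_iff_general G s A
end

section
/- Under the rounded binary-tree process, for every node v of T, Var(X_v) ≤ Σ_{l ∈ L(v)} Var(X_l) + δ · Σ_{g,h ∈ L(v), g < h} score(g)·score(h), where the second sum ranges over unordered pairs of distinct leaves of the subtree rooted at v. -/
open MeasureTheory ProbabilityTheory
open scoped ENNReal

/-- `⌊log_{1+δ} y⌋` as a natural number (for `y ≥ 1` the logarithm is nonnegative). -/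
noncomputable def rExp (δ y : ℝ) : ℕ := ⌊Real.logb (1 + δ) y⌋₊

/-- `⌊y⌋_δ = (1+δ)^{⌊log_{1+δ} y⌋}`. -/
noncomputable def rfloor (δ y : ℝ) : ℝ := (1 + δ) ^ rExp δ y

/-- `⌈y⌉_δ = (1+δ)^{⌈log_{1+δ} y⌉}`. -/
noncomputable def rceil (δ y : ℝ) : ℝ := (1 + δ) ^ (⌈Real.logb (1 + δ) y⌉₊)

/-- The probability `k / (δ(1+δ)^r)` (where `y = (1+δ)^r + k`) that the randomized
rounding rounds up. -/
noncomputable def roundUpProb (δ y : ℝ) : ℝ≥0∞ :=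
  ENNReal.ofReal ((y - rfloor δ y) / (δ * rfloor δ y))

/-- The randomized rounding `Round_δ(y)`: equal to `(1+δ)^r` with probability
`(δ(1+δ)^r − k)/(δ(1+δ)^r)` and to `(1+δ)^{r+1}` with probability `k/(δ(1+δ)^r)`,
where `y = (1+δ)^r + k`, `r = ⌊log_{1+δ} y⌋` and `k ∈ [0, δ(1+δ)^r)`.
(For `δ > 0` and `y ≥ 1` the probability `k/(δ(1+δ)^r)` lies in `[0,1)`, so the
clamping `min · 1` below is vacuous.) -/
noncomputable def roundPMF (δ y : ℝ) : PMF ℝ :=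
  (PMF.bernoulli (min (roundUpProb δ y) 1).toNNReal
    (by simpa using ENNReal.toNNReal_mono ENNReal.one_ne_top (min_le_right (roundUpProb δ y) 1))).map
    (fun b => if b then (1 + δ) ^ (rExp δ y + 1) else rfloor δ y)

/-- Expectation of a real-valued probability mass function. -/
noncomputable def pmfExp (p : PMF ℝ) : ℝ := ∫ x, x ∂p.toMeasure

/-- Variance of a real-valued probability mass function. -/
noncomputable def pmfVar (p : PMF ℝ) : ℝ := variance (fun x => x) p.toMeasure

/-- A finite rooted binary tree in which every internal node has exactly two children and
every leaf carries a real score. -/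
inductive BTree where
  | leaf (score : ℝ)
  | node (l r : BTree)

/-- The list of scores of the leaves of (the subtree rooted at) `t`. -/
def BTree.leafScores : BTree → List ℝ
  | .leaf y => [y]
  | .node l r => l.leafScores ++ r.leafScores

/-- The distribution of the random variable `X_v` of the rounded binary-tree process at
the root of `t`: at a leaf, `X_l = Round_δ(score(l))`, independently across leaves; at an
internal node `v` with children `v1, v2`, conditioned on `X_{v1}` and `X_{v2}`,
`X_v = Round_δ(X_{v1} + X_{v2})`. -/
noncomputable def treePMF (δ : ℝ) : BTree → PMF ℝ
  | .leaf y => roundPMF δ y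
  | .node l r => (treePMF δ l).bind fun x => (treePMF δ r).bind fun y => roundPMF δ (x + y)

/-- `Σ_{g < h} L_g · L_h`, the sum over unordered pairs of distinct positions of a list. -/
noncomputable def pairSum (L : List ℝ) : ℝ :=
  ∑ p ∈ (Finset.range L.length ×ˢ Finset.range L.length).filter (fun p => p.1 < p.2),
    L.getD p.1 0 * L.getD p.2 0

/-!
Rounding is unbiased, and a variable on `{f, (1 + δ) f}` with mean `s` has second moment
`s² + (s - f)((1 + δ) f - s)`. At an internal node the children's values `x, y` are independent
powers of `1 + δ`, so both are at most `f = ⌊x + y⌋_δ`, and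
`δxy - (x + y - f)((1 + δ) f - (x + y)) = δ (f - x)(f - y) + (x + y - f)² ≥ 0`.
So rounding the sum adds at most `δxy` to the variance, whose expectation is `δ` times the
product of the children's means, i.e. of their leaf-score sums. Induction on the tree, with
`pairSum (L₁ ++ L₂) = pairSum L₁ + pairSum L₂ + (ΣL₁)(ΣL₂)`, gives the bound.
-/

namespace PMF

variable {α β E : Type*}

theorem support_bind_finite {p : PMF α} {g : α → PMF β} (hp : p.support.Finite)
    (hg : ∀ a ∈ p.support, (g a).support.Finite) : (p.bind g).support.Finite := by
  rw [support_bind]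
  exact hp.biUnion hg

variable [MeasurableSpace α] [MeasurableSingletonClass α] [NormedAddCommGroup E]

theorem ae_mem_support (p : PMF α) : ∀ᵐ a ∂p.toMeasure, a ∈ p.support := by
  have h := ae_restrict_mem (μ := p.toMeasure) p.support_countable.measurableSet
  rwa [restrict_toMeasure_support] at h

theorem integrable_of_support_finite {p : PMF α} (hp : p.support.Finite) (f : α → E) :
    Integrable f p.toMeasure := by
  simpa [IntegrableOn, restrict_toMeasure_support] using
    IntegrableOn.of_finite hp (f := f) (μ := p.toMeasure)

theorem integral_mono_support {p : PMF α} (hp : p.support.Finite) {f g : α → ℝ}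
    (h : ∀ a ∈ p.support, f a ≤ g a) : ∫ a, f a ∂p.toMeasure ≤ ∫ a, g a ∂p.toMeasure :=
  integral_mono_ae (integrable_of_support_finite hp f) (integrable_of_support_finite hp g)
    (p.ae_mem_support.mono h)

variable [NormedSpace ℝ E]

theorem integral_congr_support {p : PMF α} {f g : α → E} (h : ∀ a ∈ p.support, f a = g a) :
    ∫ a, f a ∂p.toMeasure = ∫ a, g a ∂p.toMeasure :=
  integral_congr_ae (p.ae_mem_support.mono h)

variable [CompleteSpace E]

theorem integral_eq_sum_of_support_subset (p : PMF α) {s : Finset α} (hs : p.support ⊆ s)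
    (f : α → E) : ∫ a, f a ∂p.toMeasure = ∑ a ∈ s, (p a).toReal • f a := by
  rw [integral_eq_tsum p f (integrable_of_support_finite (s.finite_toSet.subset hs) f)]
  exact tsum_eq_sum fun a ha => by simp [(p.apply_eq_zero_iff a).2 fun h => ha (hs h)]

theorem integral_bind [MeasurableSpace β] [MeasurableSingletonClass β] {p : PMF α}
    {g : α → PMF β} (hp : p.support.Finite) (hg : ∀ a ∈ p.support, (g a).support.Finite)
    (f : β → E) :
    ∫ b, f b ∂(p.bind g).toMeasure = ∫ a, ∫ b, f b ∂(g a).toMeasure ∂p.toMeasure := by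
  set S := hp.toFinset
  set T := (support_bind_finite hp hg).toFinset
  have hT : ∀ a ∈ S, (g a).support ⊆ T := fun a ha b hb => by
    simp only [S, T, Set.Finite.coe_toFinset, Set.Finite.mem_toFinset] at ha ⊢
    exact (mem_support_bind_iff _ _ _).2 ⟨a, ha, hb⟩
  have hbind : ∀ b, ((p.bind g) b).toReal = ∑ a ∈ S, (p a).toReal * (g a b).toReal := by
    intro b
    rw [bind_apply, tsum_eq_sum (s := S) fun a ha => by
      simp [(p.apply_eq_zero_iff a).2 (by simpa [S] using ha)],
      ENNReal.toReal_sum fun a _ => ENNReal.mul_ne_top (p.apply_ne_top a) ((g a).apply_ne_top b)]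
    simp only [ENNReal.toReal_mul]
  rw [integral_eq_sum_of_support_subset _ (s := T) (by simp [T]),
    integral_eq_sum_of_support_subset _ (s := S) (by simp [S])]
  simp_rw [hbind, Finset.sum_smul]
  rw [Finset.sum_comm]
  refine Finset.sum_congr rfl fun a ha => ?_
  rw [integral_eq_sum_of_support_subset _ (hT a ha), Finset.smul_sum]
  simp only [mul_smul]

end PMF

theorem pmfVar_eq_of_support_finite {p : PMF ℝ} (hp : p.support.Finite) :
    pmfVar p = ∫ x, x ^ 2 ∂p.toMeasure - (∫ x, x ∂p.toMeasure) ^ 2 := by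
  rw [pmfVar, variance_eq_sub ((memLp_two_iff_integrable_sq measurable_id'.aestronglyMeasurable).2
    (PMF.integrable_of_support_finite hp _))]
  rfl

theorem List.sum_eq_sum_range_getD {M : Type*} [AddCommMonoid M] (L : List M) :
    L.sum = ∑ i ∈ Finset.range L.length, L.getD i 0 := by
  induction L with
  | nil => simp
  | cons a L ih => simp [Finset.sum_range_succ', ih, add_comm]

theorem pairSum_nil : pairSum [] = 0 := by simp [pairSum]

theorem pairSum_cons (a : ℝ) (L : List ℝ) : pairSum (a :: L) = a * L.sum + pairSum L := by
  simp [pairSum, Finset.sum_filter, Finset.sum_product, Finset.sum_range_succ', Finset.mul_sum,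
    List.sum_eq_sum_range_getD, add_comm]

theorem pairSum_append (L₁ L₂ : List ℝ) :
    pairSum (L₁ ++ L₂) = pairSum L₁ + pairSum L₂ + L₁.sum * L₂.sum := by
  induction L₁ with
  | nil => simp [pairSum_nil]
  | cons a L ih =>
    rw [List.cons_append, pairSum_cons, ih, pairSum_cons, List.sum_append, List.sum_cons]
    ring

section rounding

variable {δ y : ℝ}

theorem pow_le_iff_le_rExp (hδ : 0 < δ) (hy : 1 ≤ y) {n : ℕ} :
    (1 + δ) ^ n ≤ y ↔ n ≤ rExp δ y := by
  rw [rExp, Nat.le_floor_iff (Real.logb_nonneg (by linarith) hy),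
    Real.le_logb_iff_rpow_le (by linarith) (by linarith), Real.rpow_natCast]

theorem rfloor_le (hδ : 0 < δ) (hy : 1 ≤ y) : rfloor δ y ≤ y :=
  (pow_le_iff_le_rExp hδ hy).2 le_rfl

theorem lt_mul_rfloor (hδ : 0 < δ) (hy : 1 ≤ y) : y < (1 + δ) * rfloor δ y := by
  rw [rfloor, ← pow_succ', ← not_le, pow_le_iff_le_rExp hδ hy]
  omega

theorem pow_le_rfloor (hδ : 0 < δ) {n : ℕ} (h : (1 + δ) ^ n ≤ y) : (1 + δ) ^ n ≤ rfloor δ y :=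
  have hy : 1 ≤ y := (one_le_pow₀ (by linarith)).trans h
  pow_le_pow_right₀ (by linarith) ((pow_le_iff_le_rExp hδ hy).1 h)

theorem one_le_rfloor (hδ : 0 < δ) : 1 ≤ rfloor δ y :=
  one_le_pow₀ (by linarith)

theorem roundUpProb_toReal (hδ : 0 < δ) (hy : 1 ≤ y) :
    (roundUpProb δ y).toReal = (y - rfloor δ y) / (δ * rfloor δ y) :=
  ENNReal.toReal_ofReal (div_nonneg (by linarith [rfloor_le hδ hy])
    (by have := one_le_rfloor (y := y) hδ; positivity))

theorem roundUpProb_le_one (hδ : 0 < δ) (hy : 1 ≤ y) : roundUpProb δ y ≤ 1 := by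
  have := one_le_rfloor (y := y) hδ
  refine ENNReal.ofReal_le_one.2 ((div_le_one (by positivity)).2 ?_)
  linarith [lt_mul_rfloor hδ hy]

theorem support_roundPMF_subset :
    (roundPMF δ y).support ⊆ {rfloor δ y, (1 + δ) ^ (rExp δ y + 1)} := by
  rw [roundPMF, PMF.support_map]
  rintro z ⟨_ | _, -, rfl⟩ <;> simp

variable (δ y) in
theorem support_roundPMF_finite : (roundPMF δ y).support.Finite :=
  (Set.toFinite _).subset support_roundPMF_subset

theorem integral_roundPMF (hδ : 0 < δ) (hy : 1 ≤ y) (f : ℝ → ℝ) :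
    ∫ z, f z ∂(roundPMF δ y).toMeasure =
      (1 - (roundUpProb δ y).toReal) * f (rfloor δ y)
        + (roundUpProb δ y).toReal * f ((1 + δ) * rfloor δ y) := by
  have hf :=
    (PMF.integrable_of_support_finite (support_roundPMF_finite δ y) f).aestronglyMeasurable
  rw [roundPMF, ← PMF.toMeasure_map (hf := measurable_from_top)] at hf ⊢
  rw [integral_map measurable_from_top.aemeasurable hf]
  have hq : (roundUpProb δ y).toNNReal ≤ 1 :=
    ENNReal.toNNReal_mono ENNReal.one_ne_top (roundUpProb_le_one hδ hy)
  rw [PMF.integral_eq_sum, Fintype.sum_bool]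
  simp only [PMF.bernoulli_apply, min_eq_left (roundUpProb_le_one hδ hy), cond_true, cond_false,
    ENNReal.coe_toReal, NNReal.coe_sub hq, NNReal.coe_one, ENNReal.coe_toNNReal_eq_toReal,
    ite_true, Bool.false_eq_true, ite_false, smul_eq_mul, rfloor, pow_succ']
  ring

theorem integral_id_roundPMF (hδ : 0 < δ) (hy : 1 ≤ y) :
    ∫ z, z ∂(roundPMF δ y).toMeasure = y := by
  have := one_le_rfloor (y := y) hδ
  rw [integral_roundPMF hδ hy, roundUpProb_toReal hδ hy]
  field_simp
  ring

theorem integral_sq_roundPMF (hδ : 0 < δ) (hy : 1 ≤ y) :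
    ∫ z, z ^ 2 ∂(roundPMF δ y).toMeasure =
      y ^ 2 + (y - rfloor δ y) * ((1 + δ) * rfloor δ y - y) := by
  have := one_le_rfloor (y := y) hδ
  rw [integral_roundPMF hδ hy, roundUpProb_toReal hδ hy]
  field_simp
  ring

theorem support_roundPMF_subset_range_pow :
    (roundPMF δ y).support ⊆ Set.range ((1 + δ) ^ · : ℕ → ℝ) := fun _ hz => by
  rcases support_roundPMF_subset hz with rfl | rfl
  exacts [⟨_, rfl⟩, ⟨_, rfl⟩]

end rounding

theorem sub_mul_sub_le_mul {δ x y f : ℝ} (hδ : 0 ≤ δ) (hx : x ≤ f) (hy : y ≤ f) :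
    (x + y - f) * ((1 + δ) * f - (x + y)) ≤ δ * x * y := by
  nlinarith [mul_nonneg hδ (mul_nonneg (sub_nonneg.2 hx) (sub_nonneg.2 hy)), sq_nonneg (x + y - f)]

theorem integral_sq_roundPMF_add_le {δ x y : ℝ} (hδ : 0 < δ)
    (hx : x ∈ Set.range ((1 + δ) ^ · : ℕ → ℝ)) (hy : y ∈ Set.range ((1 + δ) ^ · : ℕ → ℝ)) :
    ∫ z, z ^ 2 ∂(roundPMF δ (x + y)).toMeasure ≤ x ^ 2 + (2 + δ) * x * y + y ^ 2 := by
  obtain ⟨m, rfl⟩ := hx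
  obtain ⟨n, rfl⟩ := hy
  have hm : 1 ≤ (1 + δ) ^ m := one_le_pow₀ (by linarith)
  have hn : 1 ≤ (1 + δ) ^ n := one_le_pow₀ (by linarith)
  have hfm : (1 + δ) ^ m ≤ rfloor δ ((1 + δ) ^ m + (1 + δ) ^ n) :=
    pow_le_rfloor hδ (by linarith)
  have hfn : (1 + δ) ^ n ≤ rfloor δ ((1 + δ) ^ m + (1 + δ) ^ n) :=
    pow_le_rfloor hδ (by linarith)
  rw [integral_sq_roundPMF hδ (by linarith)]
  linarith [sub_mul_sub_le_mul hδ.le hfm hfn]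

section tree

variable {δ : ℝ}

theorem support_treePMF_subset_range_pow (t : BTree) :
    (treePMF δ t).support ⊆ Set.range ((1 + δ) ^ · : ℕ → ℝ) := by
  cases t with
  | leaf y => exact support_roundPMF_subset_range_pow
  | node l r =>
    simp only [treePMF, PMF.support_bind, Set.iUnion_subset_iff]
    exact fun _ _ _ _ => support_roundPMF_subset_range_pow

theorem one_le_of_mem_support_treePMF (hδ : 0 ≤ δ) {t : BTree} {x : ℝ}
    (hx : x ∈ (treePMF δ t).support) : 1 ≤ x := by
  obtain ⟨n, rfl⟩ := support_treePMF_subset_range_pow t hx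
  exact one_le_pow₀ (by linarith)

variable (δ) in
theorem support_treePMF_finite (t : BTree) : (treePMF δ t).support.Finite := by
  induction t with
  | leaf y => exact support_roundPMF_finite δ y
  | node l r ihl ihr =>
    exact PMF.support_bind_finite ihl fun _ _ =>
      PMF.support_bind_finite ihr fun _ _ => support_roundPMF_finite _ _

variable (l r : BTree)

theorem integral_treePMF_node (f : ℝ → ℝ) :
    ∫ z, f z ∂(treePMF δ (.node l r)).toMeasure =
      ∫ x, ∫ y, ∫ z, f z ∂(roundPMF δ (x + y)).toMeasure
        ∂(treePMF δ r).toMeasure ∂(treePMF δ l).toMeasure := by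
  rw [treePMF, PMF.integral_bind (support_treePMF_finite δ l) fun _ _ =>
    PMF.support_bind_finite (support_treePMF_finite δ r) fun _ _ => support_roundPMF_finite _ _]
  exact PMF.integral_congr_support fun x _ =>
    PMF.integral_bind (support_treePMF_finite δ r) (fun _ _ => support_roundPMF_finite _ _) f

theorem integral_id_treePMF_node (hδ : 0 < δ) :
    ∫ z, z ∂(treePMF δ (.node l r)).toMeasure =
      ∫ x, x ∂(treePMF δ l).toMeasure + ∫ y, y ∂(treePMF δ r).toMeasure := by
  have hl := PMF.integrable_of_support_finite (E := ℝ) (support_treePMF_finite δ l)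
  have hr := PMF.integrable_of_support_finite (E := ℝ) (support_treePMF_finite δ r)
  rw [integral_treePMF_node]
  calc _ = ∫ x, ∫ y, (x + y) ∂(treePMF δ r).toMeasure ∂(treePMF δ l).toMeasure :=
        PMF.integral_congr_support fun x hx => PMF.integral_congr_support fun y hy =>
          integral_id_roundPMF hδ (by linarith [one_le_of_mem_support_treePMF hδ.le hx,
            one_le_of_mem_support_treePMF hδ.le hy])
    _ = ∫ x, (x + ∫ y, y ∂(treePMF δ r).toMeasure) ∂(treePMF δ l).toMeasure :=
        PMF.integral_congr_support fun x _ => by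
          rw [integral_add (hr _) (hr _), integral_const, probReal_univ, one_smul]
    _ = _ := by rw [integral_add (hl _) (hl _), integral_const, probReal_univ, one_smul]

theorem integral_sq_treePMF_node_le (hδ : 0 < δ) :
    ∫ z, z ^ 2 ∂(treePMF δ (.node l r)).toMeasure ≤
      ∫ x, x ^ 2 ∂(treePMF δ l).toMeasure
        + (2 + δ) * (∫ x, x ∂(treePMF δ l).toMeasure) * (∫ y, y ∂(treePMF δ r).toMeasure)
        + ∫ y, y ^ 2 ∂(treePMF δ r).toMeasure := by
  have hl := PMF.integrable_of_support_finite (E := ℝ) (support_treePMF_finite δ l)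
  have hr := PMF.integrable_of_support_finite (E := ℝ) (support_treePMF_finite δ r)
  rw [integral_treePMF_node]
  calc _ ≤ ∫ x, ∫ y, (x ^ 2 + (2 + δ) * x * y + y ^ 2)
          ∂(treePMF δ r).toMeasure ∂(treePMF δ l).toMeasure :=
        PMF.integral_mono_support (support_treePMF_finite δ l) fun x hx =>
          PMF.integral_mono_support (support_treePMF_finite δ r) fun y hy =>
            integral_sq_roundPMF_add_le hδ (support_treePMF_subset_range_pow l hx)
              (support_treePMF_subset_range_pow r hy)
    _ = ∫ x, (x ^ 2 + (2 + δ) * (∫ y, y ∂(treePMF δ r).toMeasure) * x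
          + ∫ y, y ^ 2 ∂(treePMF δ r).toMeasure) ∂(treePMF δ l).toMeasure :=
        PMF.integral_congr_support fun x _ => by
          rw [integral_add (hr _) (hr _), integral_add (hr _) (hr _), integral_const,
            probReal_univ, one_smul, integral_const_mul]
          ring
    _ = _ := by
      rw [integral_add (hl _) (hl _), integral_add (hl _) (hl _), integral_const,
        probReal_univ, one_smul, integral_const_mul]
      ring

end tree

theorem pmfVar_treePMF_node_le {δ : ℝ} (hδ : 0 < δ) (l r : BTree) :
    pmfVar (treePMF δ (.node l r)) ≤ pmfVar (treePMF δ l) + pmfVar (treePMF δ r)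
      + δ * (∫ x, x ∂(treePMF δ l).toMeasure) * (∫ y, y ∂(treePMF δ r).toMeasure) := by
  rw [pmfVar_eq_of_support_finite (support_treePMF_finite δ _),
    pmfVar_eq_of_support_finite (support_treePMF_finite δ l),
    pmfVar_eq_of_support_finite (support_treePMF_finite δ r), integral_id_treePMF_node l r hδ]
  linarith [integral_sq_treePMF_node_le l r hδ]

theorem integral_id_treePMF {δ : ℝ} (hδ : 0 < δ) (t : BTree) (ht : ∀ y ∈ t.leafScores, 1 ≤ y) :
    ∫ z, z ∂(treePMF δ t).toMeasure = t.leafScores.sum := by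
  induction t with
  | leaf y =>
    simpa [treePMF, BTree.leafScores] using
      integral_id_roundPMF hδ (ht y (List.mem_singleton_self y))
  | node l r ihl ihr =>
    rw [integral_id_treePMF_node l r hδ, ihl fun y hy => ht y (List.mem_append_left _ hy),
      ihr fun y hy => ht y (List.mem_append_right _ hy), BTree.leafScores, List.sum_append]

/-- Under the rounded binary-tree process, for every node `v` of `T`,
`Var(X_v) ≤ Σ_{l ∈ L(v)} Var(X_l) + δ · Σ_{g,h ∈ L(v), g < h} score(g)·score(h)`,
the second sum ranging over unordered pairs of distinct leaves of the subtree rooted at `v`. -/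
theorem treePMF_variance_total (δ : ℝ) (hδ : 0 < δ) (t : BTree)
    (hscores : ∀ y ∈ t.leafScores, 1 ≤ y) :
    pmfVar (treePMF δ t) ≤
      (t.leafScores.map (fun y => pmfVar (roundPMF δ y))).sum + δ * pairSum t.leafScores := by
  induction t with
  | leaf y => simp [treePMF, BTree.leafScores, pairSum_cons, pairSum_nil]
  | node l r ihl ihr =>
    have hl : ∀ y ∈ l.leafScores, 1 ≤ y := fun y hy => hscores y (List.mem_append_left _ hy)
    have hr : ∀ y ∈ r.leafScores, 1 ≤ y := fun y hy => hscores y (List.mem_append_right _ hy)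
    have step := pmfVar_treePMF_node_le hδ l r
    rw [integral_id_treePMF hδ l hl, integral_id_treePMF hδ r hr] at step
    simp only [BTree.leafScores, List.map_append, List.sum_append, pairSum_append]
    linarith [ihl hl, ihr hr]
end
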